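/- Let f : ℝⁿ → ℝ be μ-strongly convex, differentiable, and L-smooth with minimizer x*, where 0 < μ ≤ L. Then for any x_0, the iterates x_{k+1} = x_k − (1/L)·∇f(x_k) satisfy f(x_k) − f(x*) ≤ exp(−(μ/L)·k)·L·‖x_0 − x*‖² for all k ≥ 0. -/

import Mathlib

/-!
Strong convexity, applied along the segment from `x` to the minimiser, gives the
Polyak–Łojasiewicz inequality `2μ (f x - f x*) ≤ ‖∇f x‖²`, while the `L`-Lipschitz gradient gives
the quadratic upper bound `f y ≤ f x + ⟪∇f x, y - x⟫ + L/2 ‖y - x‖²`. Taking `y` to be the gradient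
step decreases `f` by `‖∇f x‖² / (2L)`, hence the gap `f x_k - f x*` contracts by `1 - μ/L` at every
step, and `(1 - μ/L)^k ≤ exp (-(μ/L) k)`. The same upper bound at `x*`, where `∇f = 0`, controls
the initial gap by `L/2 ‖x_0 - x*‖²`.
-/

open InnerProductSpace Set Filter Topology

section GradientMethods

variable {E : Type*} [NormedAddCommGroup E] [InnerProductSpace ℝ E] [CompleteSpace E]
  {f : E → ℝ} {f' : E → E} {μ L : ℝ}

theorem HasGradientAt.hasDerivAt_comp_add_smul {g x d : E} {t : ℝ}
    (hf : HasGradientAt f g (x + t • d)) :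
    HasDerivAt (fun s : ℝ => f (x + s • d)) ⟪g, d⟫_ℝ t := by
  have hline : HasDerivAt (fun s : ℝ => x + s • d) d t := by
    simpa using ((hasDerivAt_id t).smul_const d).const_add x
  exact hf.hasFDerivAt.comp_hasDerivAt t hline

theorem IsLocalMin.hasGradientAt_eq_zero {g x : E} (h : IsLocalMin f x)
    (hf : HasGradientAt f g x) : g = 0 := by
  simpa using h.hasFDerivAt_eq_zero hf.hasFDerivAt

theorem StrongConvexOn.add_inner_add_le {s : Set E} {g x y : E}
    (hf : StrongConvexOn s μ f) (hx : x ∈ s) (hy : y ∈ s) (hg : HasGradientAt f g x) :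
    f x + ⟪g, y - x⟫_ℝ + μ / 2 * ‖y - x‖ ^ 2 ≤ f y := by
  have hslope : Tendsto (fun t : ℝ => t⁻¹ • (f (x + t • (y - x)) - f x)) (𝓝[>] 0)
      (𝓝 ⟪g, y - x⟫_ℝ) :=
    (hg.hasFDerivAt.hasLineDerivAt (y - x)).tendsto_slope_zero_right
  have hbound : Tendsto (fun t : ℝ => f y - f x - (1 - t) * (μ / 2 * ‖y - x‖ ^ 2)) (𝓝[>] 0)
      (𝓝 (f y - f x - μ / 2 * ‖y - x‖ ^ 2)) := by
    refine tendsto_nhdsWithin_of_tendsto_nhds ?_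
    have : Continuous (fun t : ℝ => f y - f x - (1 - t) * (μ / 2 * ‖y - x‖ ^ 2)) := by fun_prop
    simpa using this.tendsto 0
  -- the chord inequality at `(1 - t) • x + t • y`, divided by `t`
  have hle : ∀ᶠ t in 𝓝[>] (0 : ℝ),
      t⁻¹ • (f (x + t • (y - x)) - f x) ≤ f y - f x - (1 - t) * (μ / 2 * ‖y - x‖ ^ 2) := by
    filter_upwards [Ioo_mem_nhdsGT one_pos] with t ⟨ht0, ht1⟩
    have h := hf.2 hx hy (sub_nonneg.2 ht1.le) ht0.le (sub_add_cancel 1 t)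
    have hpt : (1 - t) • x + t • y = x + t • (y - x) := by module
    rw [hpt, norm_sub_rev] at h
    rw [smul_eq_mul, inv_mul_le_iff₀ ht0]
    simp only [smul_eq_mul] at h
    linarith
  linarith [le_of_tendsto_of_tendsto hslope hbound hle]

theorem le_add_inner_add_of_lipschitz_gradient (hf : ∀ x, HasGradientAt f (f' x) x)
    (hlip : ∀ x y, ‖f' x - f' y‖ ≤ L * ‖x - y‖) (x y : E) :
    f y ≤ f x + ⟪f' x, y - x⟫_ℝ + L / 2 * ‖y - x‖ ^ 2 := by
  set d := y - x
  set ψ : ℝ → ℝ := fun t => f (x + t • d) - t * ⟪f' x, d⟫_ℝ - L / 2 * t ^ 2 * ‖d‖ ^ 2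
  have hψ : ∀ t, HasDerivAt ψ (⟪f' (x + t • d) - f' x, d⟫_ℝ - L * t * ‖d‖ ^ 2) t := by
    intro t
    have := (((hf (x + t • d)).hasDerivAt_comp_add_smul.sub
      ((hasDerivAt_id t).mul_const ⟪f' x, d⟫_ℝ)).sub
      (((hasDerivAt_pow 2 t).const_mul (L / 2)).mul_const (‖d‖ ^ 2)))
    refine this.congr_deriv ?_
    rw [inner_sub_left]
    ring
  have hψ_nonpos : ∀ t ∈ interior (Ici (0 : ℝ)),
      ⟪f' (x + t • d) - f' x, d⟫_ℝ - L * t * ‖d‖ ^ 2 ≤ 0 := by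
    intro t ht
    rw [interior_Ici] at ht
    rw [sub_nonpos]
    calc ⟪f' (x + t • d) - f' x, d⟫_ℝ ≤ ‖f' (x + t • d) - f' x‖ * ‖d‖ := real_inner_le_norm _ _
      _ ≤ L * ‖t • d‖ * ‖d‖ := by
        gcongr
        simpa using hlip (x + t • d) x
      _ = L * t * ‖d‖ ^ 2 := by rw [norm_smul, Real.norm_of_nonneg ht.le]; ring
  have hanti : AntitoneOn ψ (Ici 0) :=
    antitoneOn_of_hasDerivWithinAt_nonpos (convex_Ici 0)
      (fun t _ => (hψ t).continuousAt.continuousWithinAt)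
      (fun t _ => (hψ t).hasDerivWithinAt) hψ_nonpos
  have h01 := hanti (mem_Ici.2 le_rfl) (mem_Ici.2 zero_le_one) zero_le_one
  norm_num [ψ, d] at h01
  linarith

theorem apply_gradient_step_le (hf : ∀ x, HasGradientAt f (f' x) x)
    (hlip : ∀ x y, ‖f' x - f' y‖ ≤ L * ‖x - y‖) (hL : 0 < L) (x : E) :
    f (x - (1 / L) • f' x) ≤ f x - ‖f' x‖ ^ 2 / (2 * L) := by
  have h := le_add_inner_add_of_lipschitz_gradient hf hlip x (x - (1 / L) • f' x)
  rw [sub_sub_cancel_left, inner_neg_right, inner_smul_right, real_inner_self_eq_norm_sq,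
    norm_neg, norm_smul, Real.norm_of_nonneg (by positivity)] at h
  convert h using 1
  field_simp
  ring

theorem StrongConvexOn.two_mul_sub_le_sq_norm_gradient {s : Set E} {g x y : E}
    (hf : StrongConvexOn s μ f) (hμ : 0 < μ) (hx : x ∈ s) (hy : y ∈ s)
    (hg : HasGradientAt f g x) : 2 * μ * (f x - f y) ≤ ‖g‖ ^ 2 := by
  have h := hf.add_inner_add_le hx hy hg
  have hcs := neg_le_of_abs_le (abs_real_inner_le_norm g (y - x))
  -- complete the square: `‖g‖ ‖d‖ - μ/2 ‖d‖² ≤ ‖g‖² / (2μ)`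
  nlinarith [sq_nonneg (μ * ‖y - x‖ - ‖g‖)]

theorem StrongConvexOn.gradient_step_sub_le (hf : ∀ x, HasGradientAt f (f' x) x)
    (hlip : ∀ x y, ‖f' x - f' y‖ ≤ L * ‖x - y‖) (hsc : StrongConvexOn univ μ f) (hμ : 0 < μ)
    (hL : 0 < L) (x y : E) :
    f (x - (1 / L) • f' x) - f y ≤ (1 - μ / L) * (f x - f y) := by
  have hpl := hsc.two_mul_sub_le_sq_norm_gradient hμ (mem_univ x) (mem_univ y) (hf x)
  calc f (x - (1 / L) • f' x) - f y ≤ f x - f y - ‖f' x‖ ^ 2 / (2 * L) := by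
        linarith [apply_gradient_step_le hf hlip hL x]
    _ ≤ f x - f y - 2 * μ * (f x - f y) / (2 * L) := by gcongr
    _ = (1 - μ / L) * (f x - f y) := by field_simp

end GradientMethods

theorem stmt_19 (n : ℕ) (f : EuclideanSpace ℝ (Fin n) → ℝ)
    (f' : EuclideanSpace ℝ (Fin n) → EuclideanSpace ℝ (Fin n))
    (hgrad : ∀ x, HasGradientAt f (f' x) x)
    (μ L : ℝ) (hμ : 0 < μ) (hμL : μ ≤ L)
    (hsc : StrongConvexOn Set.univ μ f)
    (hlip : ∀ x y, ‖f' x - f' y‖ ≤ L * ‖x - y‖)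
    (xstar : EuclideanSpace ℝ (Fin n)) (hmin : ∀ y, f xstar ≤ f y)
    (x : ℕ → EuclideanSpace ℝ (Fin n))
    (hx : ∀ k, x (k + 1) = x k - (1 / L) • f' (x k)) :
    ∀ k : ℕ, f (x k) - f xstar ≤
      Real.exp (-(μ / L) * k) * L * ‖x 0 - xstar‖ ^ 2 := by
  intro k
  have hL : 0 < L := hμ.trans_le hμL
  have hrate : 0 ≤ 1 - μ / L := sub_nonneg.2 ((div_le_one hL).2 hμL)
  have hgeom : f (x k) - f xstar ≤ (1 - μ / L) ^ k * (f (x 0) - f xstar) :=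
    le_geom (u := fun j => f (x j) - f xstar) hrate k fun j _ => by
      simpa only [hx j] using hsc.gradient_step_sub_le hgrad hlip hμ hL (x j) xstar
  have hinit : f (x 0) - f xstar ≤ L / 2 * ‖x 0 - xstar‖ ^ 2 := by
    have hstat := IsLocalMin.hasGradientAt_eq_zero (Eventually.of_forall hmin) (hgrad xstar)
    have := le_add_inner_add_of_lipschitz_gradient hgrad hlip xstar (x 0)
    rw [hstat, inner_zero_left] at this
    linarith
  calc f (x k) - f xstar ≤ (1 - μ / L) ^ k * (f (x 0) - f xstar) := hgeom
    _ ≤ Real.exp (-(μ / L)) ^ k * (L * ‖x 0 - xstar‖ ^ 2) := by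
        gcongr
        · linarith [hmin (x 0)]
        · exact Real.one_sub_le_exp_neg _
        · linarith [mul_nonneg hL.le (sq_nonneg ‖x 0 - xstar‖)]
    _ = Real.exp (-(μ / L) * k) * L * ‖x 0 - xstar‖ ^ 2 := by
        rw [← Real.exp_nat_mul]; ring_nf
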